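/- Fix α ∈ (0,1/2), let ε ≤ (1/2)√α, and let R̂_N : ℝ^N → ℝ be an arbitrary measurable estimator. Then there exists a real-valued random variable X with σ_{ES_α(X)} = 1 and with F_X^{−1} 1-Lipschitz on [1−2α, 1−α/2], such that for i.i.d. copies X_1, …, X_N of X one has P(|R̂_N(X_1,…,X_N) − ES_α(X)| ≥ (1/10) ε σ_{ES_α(X)}) ≥ exp(−N ε²). -/

import Mathlib

/-!
Take the law with mass `p = 1/(1+y²)` at `0` and mass `1 - p` at `b = α(1+y²)/y`. For `y ≤ ε` one
has `p ≥ 1 - α/2`, so its quantile function vanishes on `(0, p] ⊇ [1-2α, 1-α/2]`, its expected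
shortfall is `(1-p)b/α = y` and `σ²_{ES_α} = p(1-p)b²/α² = 1`. The all-zero sample has probability
`p^N ≥ exp(-Nε²)` under each such law, and on it the estimator returns one number, which lies at
distance at least `ε/4` from `y = ε` or from `y = ε/2`.
-/

open MeasureTheory ProbabilityTheory Set Filter Topology
open scoped ENNReal NNReal

noncomputable section

/-- The cumulative distribution function of a distribution `μ` on `ℝ`. -/
def distCdf (μ : Measure ℝ) (t : ℝ) : ℝ := (μ (Set.Iic t)).toReal

/-- The value at risk (generalized inverse of the cdf) at level `u`. -/
def VaR (μ : Measure ℝ) (u : ℝ) : ℝ := sInf {t : ℝ | u ≤ distCdf μ t}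

/-- The expected shortfall at level `α`. -/
def ES (α : ℝ) (μ : Measure ℝ) : ℝ := (1 / α) * ∫ u in Set.Ioo (1 - α) 1, VaR μ u

/-- The variance associated to the estimation of the expected shortfall, with values in `[0,∞]`. -/
def sigmaSq (α : ℝ) (μ : Measure ℝ) : ℝ≥0∞ :=
  ENNReal.ofReal (1 / α ^ 2) *
    ∫⁻ t in Set.Ioi (VaR μ (1 - α)), ∫⁻ s in Set.Ioi (VaR μ (1 - α)),
      ENNReal.ofReal (distCdf μ (min t s) - distCdf μ t * distCdf μ s)

/-- The standard deviation `σ_{ES_α}`. -/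
def sigmaES (α : ℝ) (μ : Measure ℝ) : ℝ := Real.sqrt (sigmaSq α μ).toReal

/-- Empirical cdf of the first `N` entries of the data `x`. -/
def empCdf (N : ℕ) (x : ℕ → ℝ) (t : ℝ) : ℝ :=
  ((Finset.range N).filter fun i => x i ≤ t).card / N

/-- Generalized inverse of the empirical cdf. -/
def empInv (N : ℕ) (x : ℕ → ℝ) (u : ℝ) : ℝ := sInf {t : ℝ | u ≤ empCdf N x t}

/-- The plug-in estimator of the expected shortfall from the first `N` data points of `x`. -/
def plugIn (α : ℝ) (N : ℕ) (x : ℕ → ℝ) : ℝ :=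
  (1 / α) * ∫ u in Set.Ioo (1 - α) 1, empInv N x u

/-- The plug-in estimator on the `j`-th block (0-based) of size `m`. -/
def blockEst (α : ℝ) (m : ℕ) (x : ℕ → ℝ) (j : ℕ) : ℝ :=
  plugIn α m (fun i => x (j * m + i))

/-- The order statistics (sorted list) of `v 0, …, v (n-1)`. -/
def sortedVals (n : ℕ) (v : ℕ → ℝ) : List ℝ :=
  List.insertionSort (· ≤ ·) ((List.range n).map v)

/-- The linearly interpolated empirical quantile function `Q̂` of the values `v 0, …, v (n-1)`:
`Q̂((j-1)/(n-1))` equals the `j`-th order statistic (1-based), interpolated linearly in between. -/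
def interpQ (n : ℕ) (v : ℕ → ℝ) (β : ℝ) : ℝ :=
  let l := sortedVals n v
  let t := β * ((n : ℝ) - 1)
  let k := ⌊t⌋₊
  l.getD k 0 + (t - (k : ℝ)) * (l.getD (k + 1) (l.getD k 0) - l.getD k 0)

/-- The proposed estimator `Ŝ_N` with accuracy parameter `ε` and hyperparameters `β₁ ≤ β₂`:
the plug-in estimator truncated to `[Q̂(β₁), Q̂(β₂)]`, where `Q̂` is the interpolated quantile
function of the block-wise plug-in estimators on `n = ⌊N/m⌋` disjoint blocks of size
`m = ⌈11/ε²⌉`. -/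
def propEst (α ε β₁ β₂ : ℝ) (N : ℕ) (x : ℕ → ℝ) : ℝ :=
  let m := ⌈(11 : ℝ) / ε ^ 2⌉₊
  let n := N / m
  min (max (plugIn α N x) (interpQ n (blockEst α m x) β₁)) (interpQ n (blockEst α m x) β₂)

/-- Extension of a finite data vector to `ℕ → ℝ` (by `0` outside). -/
def pad (N : ℕ) (x : Fin N → ℝ) : ℕ → ℝ := fun i => if h : i < N then x ⟨i, h⟩ else 0

lemma pow_measure_singleton_le_pi {ι X : Type*} [Fintype ι] [MeasurableSpace X] (μ : Measure X)
    [SigmaFinite μ] {a : X} {S : Set (ι → X)} (ha : (fun _ => a) ∈ S) :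
    μ {a} ^ Fintype.card ι ≤ Measure.pi (fun _ : ι => μ) S := by
  calc μ {a} ^ Fintype.card ι = Measure.pi (fun _ : ι => μ) {fun _ => a} := by
        rw [← Set.univ_pi_singleton, Measure.pi_pi, Finset.prod_const, Finset.card_univ]
    _ ≤ _ := measure_mono (Set.singleton_subset_iff.2 ha)

lemma exp_neg_le_one_div_one_add {x y : ℝ} (hy : 0 ≤ y) (hyx : y ≤ x) :
    Real.exp (-x) ≤ 1 / (1 + y) := by
  rw [Real.exp_neg, one_div]
  gcongr
  linarith [Real.add_one_le_exp x]

lemma exists_mem_pair_half_dist_le (a y₁ y₂ : ℝ) :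
    ∃ y ∈ ({y₁, y₂} : Set ℝ), |y₁ - y₂| / 2 ≤ |a - y| := by
  by_contra! h
  have h₁ := h y₁ (by simp)
  have h₂ := h y₂ (by simp)
  have := abs_sub_le y₁ a y₂
  rw [abs_sub_comm y₁ a] at this
  linarith

def twoPoint (p b : ℝ) : Measure ℝ :=
  ENNReal.ofReal p • Measure.dirac 0 + ENNReal.ofReal (1 - p) • Measure.dirac b

section TwoPoint

variable {α p b : ℝ}

lemma isProbabilityMeasure_twoPoint (hp0 : 0 ≤ p) (hp1 : p ≤ 1) :
    IsProbabilityMeasure (twoPoint p b) := by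
  constructor
  simp only [twoPoint, Measure.add_apply, Measure.smul_apply, smul_eq_mul, measure_univ, mul_one]
  rw [← ENNReal.ofReal_add hp0 (by linarith)]
  norm_num

lemma twoPoint_singleton_zero (hb : b ≠ 0) : twoPoint p b {0} = ENNReal.ofReal p := by
  simp [twoPoint, Measure.dirac_apply', hb]

lemma distCdf_twoPoint_of_nonneg (hp0 : 0 ≤ p) (hp1 : p ≤ 1) {t : ℝ} (ht : 0 ≤ t) :
    distCdf (twoPoint p b) t = if t < b then p else 1 := by
  simp only [distCdf, twoPoint, Measure.add_apply, Measure.smul_apply,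
    Measure.dirac_apply' _ measurableSet_Iic, Set.indicator_apply, Set.mem_Iic, ht, if_true,
    Pi.one_apply, smul_eq_mul, mul_one]
  by_cases htb : t < b
  · simp [not_le.2 htb, hp0]
  · rw [if_pos (not_lt.1 htb), if_neg htb, mul_one, ← ENNReal.ofReal_add hp0 (by linarith)]
    simp

lemma distCdf_twoPoint_of_neg (hb : 0 < b) {t : ℝ} (ht : t < 0) :
    distCdf (twoPoint p b) t = 0 := by
  simp [distCdf, twoPoint, Measure.dirac_apply', not_le.2 ht, not_le.2 (ht.trans hb)]

lemma VaR_twoPoint_of_le (hb : 0 < b) (hp0 : 0 ≤ p) (hp1 : p ≤ 1) {u : ℝ} (hu : 0 < u)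
    (hup : u ≤ p) : VaR (twoPoint p b) u = 0 := by
  suffices {t : ℝ | u ≤ distCdf (twoPoint p b) t} = Set.Ici 0 by rw [VaR, this, csInf_Ici]
  ext t
  rcases lt_or_ge t 0 with ht | ht
  · rw [Set.mem_ofPred_eq, distCdf_twoPoint_of_neg hb ht]
    exact iff_of_false (by linarith) (not_le.2 ht)
  · rw [Set.mem_ofPred_eq, distCdf_twoPoint_of_nonneg hp0 hp1 ht]
    refine iff_of_true ?_ ht
    split_ifs <;> linarith

lemma VaR_twoPoint_of_lt (hb : 0 < b) (hp0 : 0 ≤ p) (hp1 : p ≤ 1) {u : ℝ} (hpu : p < u)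
    (hu : u ≤ 1) : VaR (twoPoint p b) u = b := by
  suffices {t : ℝ | u ≤ distCdf (twoPoint p b) t} = Set.Ici b by rw [VaR, this, csInf_Ici]
  ext t
  rcases lt_or_ge t 0 with ht | ht
  · rw [Set.mem_ofPred_eq, distCdf_twoPoint_of_neg hb ht]
    exact iff_of_false (by linarith) (not_le.2 (ht.trans hb))
  · rw [Set.mem_ofPred_eq, distCdf_twoPoint_of_nonneg hp0 hp1 ht]
    split_ifs with htb
    · exact iff_of_false (not_le.2 hpu) (not_le.2 htb)
    · exact iff_of_true hu (not_lt.1 htb)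

lemma ES_twoPoint (hb : 0 < b) (hp1 : p ≤ 1) (hα1 : α ≤ 1) (hαp : 1 - α ≤ p) :
    ES α (twoPoint p b) = (1 / α) * ((1 - p) * b) := by
  have hp0 : 0 ≤ p := by linarith
  have hVaR : Set.EqOn (VaR (twoPoint p b)) ((Set.Ioi p).indicator fun _ => b)
      (Set.Ioo (1 - α) 1) := by
    rintro u ⟨hαu, hu1⟩
    rcases le_or_gt u p with hup | hpu
    · rw [VaR_twoPoint_of_le hb hp0 hp1 (by linarith) hup,
        Set.indicator_of_notMem (Set.notMem_Ioi.2 hup)]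
    · rw [VaR_twoPoint_of_lt hb hp0 hp1 hpu hu1.le, Set.indicator_of_mem (Set.mem_Ioi.2 hpu)]
  rw [ES, setIntegral_congr_fun measurableSet_Ioo hVaR, setIntegral_indicator measurableSet_Ioi,
    Set.Ioo_inter_Ioi, max_eq_right hαp, setIntegral_const, measureReal_def, Real.volume_Ioo,
    ENNReal.toReal_ofReal (by linarith), smul_eq_mul]

lemma ofReal_distCdf_min_sub_mul_twoPoint (hp0 : 0 ≤ p) (hp1 : p ≤ 1) {t s : ℝ} (ht : 0 ≤ t)
    (hs : 0 ≤ s) :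
    ENNReal.ofReal (distCdf (twoPoint p b) (min t s) -
        distCdf (twoPoint p b) t * distCdf (twoPoint p b) s) =
      (Set.Iio b).indicator (fun _ => ENNReal.ofReal (p * (1 - p))) t *
        (Set.Iio b).indicator (fun _ => 1) s := by
  simp only [distCdf_twoPoint_of_nonneg hp0 hp1 (le_min ht hs),
    distCdf_twoPoint_of_nonneg hp0 hp1 ht, distCdf_twoPoint_of_nonneg hp0 hp1 hs,
    Set.indicator_apply, Set.mem_Iio, min_lt_iff]
  by_cases htb : t < b <;> by_cases hsb : s < b <;> simp [htb, hsb]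
  ring_nf

lemma lintegral_Ioi_zero_indicator_Iio (c : ℝ≥0∞) :
    ∫⁻ s in Set.Ioi 0, (Set.Iio b).indicator (fun _ => c) s = c * ENNReal.ofReal b := by
  rw [lintegral_indicator measurableSet_Iio, setLIntegral_const,
    Measure.restrict_apply measurableSet_Iio, Set.Iio_inter_Ioi, Real.volume_Ioo, sub_zero]

lemma sigmaSq_twoPoint (hb : 0 < b) (hp1 : p ≤ 1) (hα1 : α < 1) (hαp : 1 - α ≤ p) :
    sigmaSq α (twoPoint p b) = ENNReal.ofReal (1 / α ^ 2 * (p * (1 - p)) * b ^ 2) := by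
  have hp0 : 0 ≤ p := by linarith
  have hpp : 0 ≤ p * (1 - p) := mul_nonneg hp0 (by linarith)
  have hinner : ∀ t ∈ Set.Ioi (0 : ℝ), ∫⁻ s in Set.Ioi 0,
      ENNReal.ofReal (distCdf (twoPoint p b) (min t s) -
        distCdf (twoPoint p b) t * distCdf (twoPoint p b) s) =
      (Set.Iio b).indicator (fun _ => ENNReal.ofReal (p * (1 - p))) t * ENNReal.ofReal b := by
    intro t ht
    rw [setLIntegral_congr_fun measurableSet_Ioi
      fun s hs => ofReal_distCdf_min_sub_mul_twoPoint hp0 hp1 (le_of_lt ht) (le_of_lt hs),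
      lintegral_const_mul _ (measurable_const.indicator measurableSet_Iio),
      lintegral_Ioi_zero_indicator_Iio, one_mul]
  rw [sigmaSq, VaR_twoPoint_of_le hb hp0 hp1 (by linarith) hαp,
    setLIntegral_congr_fun measurableSet_Ioi hinner,
    lintegral_mul_const _ (measurable_const.indicator measurableSet_Iio),
    lintegral_Ioi_zero_indicator_Iio, ← ENNReal.ofReal_mul hpp,
    ← ENNReal.ofReal_mul (mul_nonneg hpp hb.le), ← ENNReal.ofReal_mul (by positivity)]
  ring_nf

lemma lipschitzOnWith_VaR_twoPoint (hb : 0 < b) (hp0 : 0 ≤ p) (hp1 : p ≤ 1) (K : ℝ≥0)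
    {s : Set ℝ} (hs : s ⊆ Set.Ioc 0 p) : LipschitzOnWith K (fun u => VaR (twoPoint p b) u) s := by
  intro u hu v hv
  dsimp only
  rw [VaR_twoPoint_of_le hb hp0 hp1 (hs hu).1 (hs hu).2,
    VaR_twoPoint_of_le hb hp0 hp1 (hs hv).1 (hs hv).2, edist_self]
  exact zero_le

end TwoPoint

def twoPointES (α y : ℝ) : Measure ℝ := twoPoint (1 / (1 + y ^ 2)) (α * (1 + y ^ 2) / y)

section TwoPointES

variable {α y : ℝ}

lemma one_div_one_add_sq_le_one (y : ℝ) : 1 / (1 + y ^ 2) ≤ 1 :=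
  div_le_one_of_le₀ (by nlinarith) (by positivity)

instance (α y : ℝ) : IsProbabilityMeasure (twoPointES α y) :=
  isProbabilityMeasure_twoPoint (by positivity) (one_div_one_add_sq_le_one y)

lemma ES_twoPointES (hα0 : 0 < α) (hα1 : α ≤ 1) (hy : 0 < y) (hyα : 1 - α ≤ 1 / (1 + y ^ 2)) :
    ES α (twoPointES α y) = y := by
  rw [twoPointES, ES_twoPoint (by positivity) (one_div_one_add_sq_le_one y) hα1 hyα]
  field_simp
  ring

lemma sigmaES_twoPointES (hα0 : 0 < α) (hα1 : α < 1) (hy : 0 < y)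
    (hyα : 1 - α ≤ 1 / (1 + y ^ 2)) : sigmaES α (twoPointES α y) = 1 := by
  rw [sigmaES, twoPointES,
    sigmaSq_twoPoint (by positivity) (one_div_one_add_sq_le_one y) hα1 hyα]
  have hone : 1 / α ^ 2 * (1 / (1 + y ^ 2) * (1 - 1 / (1 + y ^ 2))) * (α * (1 + y ^ 2) / y) ^ 2
      = 1 := by
    field_simp
    ring
  rw [hone, ENNReal.ofReal_one, ENNReal.toReal_one, Real.sqrt_one]

lemma lipschitzOnWith_VaR_twoPointES (hα0 : 0 < α) (hy : 0 < y) (K : ℝ≥0) {s : Set ℝ}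
    (hs : s ⊆ Set.Ioc 0 (1 / (1 + y ^ 2))) :
    LipschitzOnWith K (fun u => VaR (twoPointES α y) u) s :=
  lipschitzOnWith_VaR_twoPoint (by positivity) (by positivity) (one_div_one_add_sq_le_one y) K hs

lemma exp_neg_le_pi_twoPointES {ε : ℝ} (hα0 : 0 < α) (hy : 0 < y) (hyε : y ≤ ε) (N : ℕ)
    {S : Set (Fin N → ℝ)} (hS : (fun _ => 0) ∈ S) :
    Real.exp (-(N * ε ^ 2)) ≤ ((Measure.pi fun _ : Fin N => twoPointES α y) S).toReal := by
  have hb : α * (1 + y ^ 2) / y ≠ 0 := by positivity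
  have hpε : Real.exp (-ε ^ 2) ≤ 1 / (1 + y ^ 2) :=
    exp_neg_le_one_div_one_add (by positivity) (pow_le_pow_left₀ hy.le hyε 2)
  calc Real.exp (-(N * ε ^ 2)) = Real.exp (-ε ^ 2) ^ N := by rw [← Real.exp_nat_mul]; ring_nf
    _ ≤ (1 / (1 + y ^ 2)) ^ N := pow_le_pow_left₀ (Real.exp_pos _).le hpε N
    _ = (twoPointES α y {0} ^ Fintype.card (Fin N)).toReal := by
      rw [twoPointES, twoPoint_singleton_zero hb, ENNReal.toReal_pow, Fintype.card_fin,
        ENNReal.toReal_ofReal (by positivity)]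
    _ ≤ _ := ENNReal.toReal_mono (measure_ne_top _ _) (pow_measure_singleton_le_pi _ hS)

end TwoPointES

theorem no_estimator_beats_clt_general
    (α ε : ℝ) (hα : α ∈ Set.Ioo (0 : ℝ) (1 / 2)) (hε : 0 < ε) (hεα : ε ≤ Real.sqrt α / 2)
    (N : ℕ) (R : (Fin N → ℝ) → ℝ) :
    ∃ μ : Measure ℝ, IsProbabilityMeasure μ ∧
      sigmaES α μ = 1 ∧
      LipschitzOnWith 1 (fun u => VaR μ u) (Set.Icc (1 - 2 * α) (1 - α / 2)) ∧
      Real.exp (-(N * ε ^ 2)) ≤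
        ((Measure.pi fun _ : Fin N => μ)
          {x | (1 / 10) * ε * sigmaES α μ ≤ |R x - ES α μ|}).toReal := by
  obtain ⟨hα0, hα2⟩ := hα
  have hεα' : ε ^ 2 ≤ α / 4 :=
    calc ε ^ 2 ≤ (Real.sqrt α / 2) ^ 2 := pow_le_pow_left₀ hε.le hεα 2
      _ = α / 4 := by rw [div_pow, Real.sq_sqrt hα0.le]; norm_num
  obtain ⟨y, hy, hfar⟩ := exists_mem_pair_half_dist_le (R fun _ => 0) ε (ε / 2)
  obtain ⟨hy0, hyε⟩ : 0 < y ∧ y ≤ ε := by rcases hy with rfl | rfl <;> constructor <;> linarith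
  have hpα : 1 - α / 2 ≤ 1 / (1 + y ^ 2) := by
    rw [le_div_iff₀ (by positivity)]
    nlinarith [pow_le_pow_left₀ hy0.le hyε 2]
  have hσ := sigmaES_twoPointES hα0 (by linarith) hy0 (by linarith)
  refine ⟨twoPointES α y, inferInstance, hσ,
    lipschitzOnWith_VaR_twoPointES hα0 hy0 1 fun _ hu => ⟨by linarith [hu.1], by linarith [hu.2]⟩,
    exp_neg_le_pi_twoPointES hα0 hy0 hyε N ?_⟩
  rw [Set.mem_ofPred_eq, hσ, ES_twoPointES hα0 (by linarith) hy0 (by linarith)]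
  rw [abs_of_pos (by linarith : 0 < ε - ε / 2)] at hfar
  linarith

/-- **No estimator can outperform the CLT rate.** For any measurable estimator
`R̂_N : ℝ^N → ℝ` and any `ε ≤ √α/2`, there is a distribution with `σ_{ES_α} = 1` and
`1`-Lipschitz quantile function on `[1-2α, 1-α/2]` such that
`P(|R̂_N(X_1,…,X_N) - ES_α(X)| ≥ (1/10) ε σ_{ES_α(X)}) ≥ exp(-N ε²)`. -/
theorem no_estimator_beats_clt
    (α ε : ℝ) (hα : α ∈ Set.Ioo (0 : ℝ) (1 / 2)) (hε : 0 < ε) (hεα : ε ≤ Real.sqrt α / 2)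
    (N : ℕ) (R : (Fin N → ℝ) → ℝ) (hR : Measurable R) :
    ∃ μ : Measure ℝ, IsProbabilityMeasure μ ∧
      sigmaES α μ = 1 ∧
      LipschitzOnWith 1 (fun u => VaR μ u) (Set.Icc (1 - 2 * α) (1 - α / 2)) ∧
      Real.exp (-(N * ε ^ 2)) ≤
        ((Measure.pi fun _ : Fin N => μ)
          {x | (1 / 10) * ε * sigmaES α μ ≤ |R x - ES α μ|}).toReal :=
  no_estimator_beats_clt_general α ε hα hε hεα N R
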